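/- arXiv:1803.00094 — 4 statements merged into one kernel-verified Lean document; each statement's English description precedes it below -/
import Mathlib

section
/- Key Lemma: Let m ≥ n, σ : ℝ → ℝ be a bijective, continuous, strictly increasing function, σ̂ : ℝ^n → ℝ^n its componentwise extension, W ∈ ℝ^{m×n} of full rank n, b ∈ ℝ^n, and f(x) = σ̂(Wᵀx + b). If V ⊆ ℝ^n is open and connected, then f⁻¹(V) ⊆ ℝ^m is open and connected. -/
/-! A strictly increasing surjection of ℝ is an order isomorphism, hence a homeomorphism, so f⁻¹(V)
is the preimage of the open connected set σ̂⁻¹(V) - b under the linear map x ↦ Wᵀx, which is onto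
because W has rank n. Splitting ℝ^m along a right inverse g of Wᵀ exhibits such a preimage as the
continuous image of (σ̂⁻¹(V) - b) × ker Wᵀ under (y, k) ↦ g y + k, and ker Wᵀ is convex. -/

open Matrix Pointwise

theorem Matrix.mulVecLin_surjective_of_rank_eq_card {K l o : Type*} [Field K] [Fintype l]
    [Fintype o] (A : Matrix l o K) (hA : A.rank = Fintype.card l) :
    Function.Surjective A.mulVecLin := by
  rw [← LinearMap.range_eq_top]
  apply Submodule.eq_top_of_finrank_eq
  rwa [Module.finrank_fintype_fun_eq_card]

theorem LinearMap.isConnected_preimage_of_surjective {E F : Type*} [NormedAddCommGroup E]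
    [NormedSpace ℝ E] [NormedAddCommGroup F] [NormedSpace ℝ F] [FiniteDimensional ℝ F]
    (A : E →ₗ[ℝ] F) (hA : Function.Surjective A) {s : Set F} (hs : IsConnected s) :
    IsConnected (A ⁻¹' s) := by
  obtain ⟨g, hAg⟩ := A.exists_rightInverse_of_surjective (LinearMap.range_eq_top.2 hA)
  have hAg' : ∀ y, A (g y) = y := LinearMap.congr_fun hAg
  have hpre : A ⁻¹' s = (fun p : F × E => g p.1 + p.2) '' (s ×ˢ (LinearMap.ker A : Set E)) := by
    ext x
    constructor
    · intro hx
      exact ⟨(A x, x - g (A x)), ⟨hx, by simp [hAg']⟩, add_sub_cancel _ _⟩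
    · rintro ⟨⟨y, k⟩, ⟨hy, hk : A k = 0⟩, rfl⟩
      simpa [hAg', hk] using hy
  have hker : IsConnected (LinearMap.ker A : Set E) :=
    (LinearMap.ker A).convex.isConnected ⟨0, (LinearMap.ker A).zero_mem⟩
  rw [hpre]
  exact (hs.prod hker).image _
    ((g.continuous_of_finiteDimensional.comp continuous_fst).add continuous_snd).continuousOn

theorem key_lemma_general {m n : ℕ} (σ : ℝ → ℝ)
    (hbij : Function.Bijective σ) (hmono : StrictMono σ)
    (W : Matrix (Fin m) (Fin n) ℝ) (hrank : W.rank = n) (b : Fin n → ℝ)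
    (V : Set (Fin n → ℝ)) (hVopen : IsOpen V) (hVconn : IsConnected V) :
    IsOpen ((fun x : Fin m → ℝ => fun i => σ ((Wᵀ.mulVec x + b) i)) ⁻¹' V) ∧
    IsConnected ((fun x : Fin m → ℝ => fun i => σ ((Wᵀ.mulVec x + b) i)) ⁻¹' V) := by
  set e : (Fin n → ℝ) ≃ₜ (Fin n → ℝ) :=
    Homeomorph.piCongrRight fun _ => (hmono.orderIsoOfSurjective σ hbij.2).toHomeomorph
  have hpre : (fun x : Fin m → ℝ => fun i => σ ((Wᵀ.mulVec x + b) i)) ⁻¹' V =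
      Wᵀ.mulVecLin ⁻¹' (Homeomorph.addRight b ⁻¹' (e ⁻¹' V)) := rfl
  have hsurj : Function.Surjective Wᵀ.mulVecLin :=
    Wᵀ.mulVecLin_surjective_of_rank_eq_card (by rw [rank_transpose, hrank, Fintype.card_fin])
  rw [hpre]
  refine ⟨?_, ?_⟩
  · exact (hVopen.preimage e.continuous).preimage (Homeomorph.addRight b).continuous |>.preimage
      (LinearMap.continuous_of_finiteDimensional _)
  · exact Wᵀ.mulVecLin.isConnected_preimage_of_surjective hsurj
      ((Homeomorph.addRight b).isConnected_preimage.2 (e.isConnected_preimage.2 hVconn))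

theorem key_lemma {m n : ℕ} (hmn : n ≤ m) (σ : ℝ → ℝ)
    (hbij : Function.Bijective σ) (hcont : Continuous σ) (hmono : StrictMono σ)
    (W : Matrix (Fin m) (Fin n) ℝ) (hrank : W.rank = n) (b : Fin n → ℝ)
    (V : Set (Fin n → ℝ)) (hVopen : IsOpen V) (hVconn : IsConnected V) :
    IsOpen ((fun x : Fin m → ℝ => fun i => σ ((Wᵀ.mulVec x + b) i)) ⁻¹' V) ∧
    IsConnected ((fun x : Fin m → ℝ => fun i => σ ((Wᵀ.mulVec x + b) i)) ⁻¹' V) :=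
  key_lemma_general σ hbij hmono W hrank b V hVopen hVconn
end

section
/- Main Theorem (connected decision regions for pyramidal networks): Consider a feedforward network f_L with layer widths d = n_0 ≥ n_1 ≥ … ≥ n_{L−1}, output width n_L = m, where for 1 ≤ l ≤ L−1 the activation σ_l : ℝ → ℝ is continuous, strictly increasing, and surjective onto ℝ, each hidden weight matrix W_l ∈ ℝ^{n_{l−1}×n_l} has full rank n_l, and the output layer is affine. Then for every class j, the decision region C_j = {x ∈ ℝ^d : (f_L)_j(x) > (f_L)_k(x) for all k ≠ j} is an open connected subset of ℝ^d. -/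
/-!
A hidden layer `x ↦ σ̂ (Wᵀ x + b)` is a surjective linear map (full rank), followed by a
translation and by the coordinatewise map `σ̂`, which is a homeomorphism because `σ` is a
strictly increasing surjection. Preimages of preconnected sets under each of these maps are
preconnected; for the linear map `L` the preimage of `S` is a continuous image of `S × ker L`.
The decision region is the preimage under the hidden layers of the preimage, under the affine
output layer, of the open convex set `{y | y k < y j for all k ≠ j}`.
-/

open Matrix

section LinearPreimage

variable {E F : Type*} [AddCommGroup E] [Module ℝ E] [TopologicalSpace E]
  [IsTopologicalAddGroup E] [ContinuousSMul ℝ E]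
  [AddCommGroup F] [Module ℝ F] [TopologicalSpace F] [IsTopologicalAddGroup F]
  [ContinuousSMul ℝ F] [T2Space F] [FiniteDimensional ℝ F]

theorem IsPreconnected.preimage_of_surjective_linearMap {L : E →ₗ[ℝ] F}
    (hL : Function.Surjective L) {S : Set F} (hS : IsPreconnected S) :
    IsPreconnected (L ⁻¹' S) := by
  obtain ⟨s, hs⟩ := L.exists_rightInverse_of_surjective (LinearMap.range_eq_top.2 hL)
  have hLs : ∀ y, L (s y) = y := LinearMap.congr_fun hs
  have hpre : L ⁻¹' S = (fun p : F × E => s p.1 + p.2) '' (S ×ˢ (LinearMap.ker L : Set E)) := by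
    ext x
    constructor
    · intro hx
      refine ⟨(L x, x - s (L x)), ⟨hx, ?_⟩, add_sub_cancel _ _⟩
      simp [map_sub, hLs]
    · rintro ⟨⟨y, z⟩, ⟨hy, hz⟩, rfl⟩
      simpa [hLs, LinearMap.mem_ker.1 hz] using hy
  rw [hpre]
  exact (hS.prod (LinearMap.ker L).convex.isPreconnected).image _
    ((s.continuous_of_finiteDimensional.comp continuous_fst).add continuous_snd).continuousOn

end LinearPreimage

theorem IsPreconnected.preimage_comp_left_of_strictMono {ι : Type*} {τ : ℝ → ℝ}
    (hmono : StrictMono τ) (hsurj : Function.Surjective τ) {S : Set (ι → ℝ)}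
    (hS : IsPreconnected S) : IsPreconnected ((fun (y : ι → ℝ) i => τ (y i)) ⁻¹' S) :=
  (Homeomorph.piCongrRight fun _ =>
    (hmono.orderIsoOfSurjective τ hsurj).toHomeomorph).isPreconnected_preimage.2 hS

theorem Matrix.mulVec_surjective_of_rank_eq_card {K m n : Type*} [Field K] [Fintype m]
    [Fintype n] {A : Matrix m n K} (hA : A.rank = Fintype.card m) :
    Function.Surjective A.mulVec := by
  have hrange : LinearMap.range A.mulVecLin = ⊤ :=
    Submodule.eq_top_of_finrank_eq (by rw [← Matrix.rank, hA, Module.finrank_fintype_fun_eq_card])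
  exact LinearMap.range_eq_top.1 hrange

section Layer

variable {ι κ : Type*} [Fintype ι]

theorem continuous_layer {τ : ℝ → ℝ} (hτ : Continuous τ) (M : Matrix κ ι ℝ) (c : κ → ℝ) :
    Continuous fun x i => τ ((M *ᵥ x + c) i) :=
  continuous_pi fun i => hτ.comp <| (continuous_apply i).comp <|
    (continuous_const.matrix_mulVec continuous_id).add continuous_const

theorem IsPreconnected.preimage_layer [Fintype κ] {τ : ℝ → ℝ} (hmono : StrictMono τ)
    (hsurj : Function.Surjective τ) {M : Matrix κ ι ℝ} (hM : Function.Surjective M.mulVec)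
    (c : κ → ℝ) {S : Set (κ → ℝ)} (hS : IsPreconnected S) :
    IsPreconnected ((fun x i => τ ((M *ᵥ x + c) i)) ⁻¹' S) := by
  have hpre : IsPreconnected ((· + c) ⁻¹' ((fun y i => τ (y i)) ⁻¹' S)) :=
    (Homeomorph.addRight c).isPreconnected_preimage.2
      (IsPreconnected.preimage_comp_left_of_strictMono hmono hsurj hS)
  exact hpre.preimage_of_surjective_linearMap (L := M.mulVecLin) hM

end Layer

section DecisionRegion

variable {ι : Type*}

theorem isOpen_setOf_forall_lt [Finite ι] (j : ι) :
    IsOpen {y : ι → ℝ | ∀ k, k ≠ j → y k < y j} := by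
  simp only [Set.ofPred_forall]
  exact isOpen_iInter_of_finite fun k => isOpen_iInter_of_finite fun _ =>
    isOpen_lt (continuous_apply k) (continuous_apply j)

theorem convex_setOf_forall_lt (j : ι) : Convex ℝ {y : ι → ℝ | ∀ k, k ≠ j → y k < y j} := by
  intro y hy z hz a b ha hb hab k hk
  simp only [Pi.add_apply, Pi.smul_apply, smul_eq_mul]
  rcases ha.eq_or_lt with rfl | ha
  · rw [zero_add] at hab
    simpa [hab] using hz k hk
  · exact add_lt_add_of_lt_of_le (mul_lt_mul_of_pos_left (hy k hk) ha)
      (mul_le_mul_of_nonneg_left (hz k hk).le hb)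

end DecisionRegion

section Network

variable {Lm : ℕ} {n : ℕ → ℕ} {σ : ℕ → ℝ → ℝ}
  {W : (k : ℕ) → Matrix (Fin (n k)) (Fin (n (k + 1))) ℝ} {b : (k : ℕ) → Fin (n (k + 1)) → ℝ}
  {f : (k : ℕ) → (Fin (n 0) → ℝ) → (Fin (n k) → ℝ)}

theorem continuous_hiddenLayer (hσ : ∀ l, 1 ≤ l → l ≤ Lm → Continuous (σ l))
    (hf0 : ∀ x, f 0 x = x)
    (hfhid : ∀ k, k + 1 ≤ Lm →
      ∀ x, f (k + 1) x = fun i => σ (k + 1) (((W k)ᵀ.mulVec (f k x) + b k) i)) :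
    ∀ k ≤ Lm, Continuous (f k) := by
  intro k
  induction k with
  | zero => exact fun _ => (funext hf0 : f 0 = id) ▸ continuous_id
  | succ k ih =>
    intro hk
    rw [show f (k + 1) = _ from funext (hfhid k hk)]
    exact (continuous_layer (hσ (k + 1) k.succ_pos hk) _ _).comp (ih (by omega))

theorem isPreconnected_preimage_hiddenLayer
    (hσ : ∀ l, 1 ≤ l → l ≤ Lm → StrictMono (σ l) ∧ Function.Surjective (σ l))
    (hrank : ∀ k, k + 1 ≤ Lm → (W k).rank = n (k + 1))
    (hf0 : ∀ x, f 0 x = x)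
    (hfhid : ∀ k, k + 1 ≤ Lm →
      ∀ x, f (k + 1) x = fun i => σ (k + 1) (((W k)ᵀ.mulVec (f k x) + b k) i)) :
    ∀ k ≤ Lm, ∀ S, IsPreconnected S → IsPreconnected (f k ⁻¹' S) := by
  intro k
  induction k with
  | zero => exact fun _ S hS => (funext hf0 : f 0 = id) ▸ hS
  | succ k ih =>
    intro hk S hS
    obtain ⟨hmono, hsurj⟩ := hσ (k + 1) k.succ_pos hk
    have hW : Function.Surjective (W k)ᵀ.mulVec :=
      mulVec_surjective_of_rank_eq_card (by rw [rank_transpose, hrank k hk, Fintype.card_fin])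
    have hstep : f (k + 1) = (fun y i => σ (k + 1) (((W k)ᵀ *ᵥ y + b k) i)) ∘ f k :=
      funext (hfhid k hk)
    rw [hstep, Set.preimage_comp]
    exact ih (by omega) _ (hS.preimage_layer hmono hsurj hW (b k))

end Network

theorem main_connected_decision_regions_general
    (Lm : ℕ) (n : ℕ → ℕ)
    (σ : ℕ → ℝ → ℝ)
    (hσ : ∀ l, 1 ≤ l → l ≤ Lm →
      Continuous (σ l) ∧ StrictMono (σ l) ∧ Function.Surjective (σ l))
    (W : (k : ℕ) → Matrix (Fin (n k)) (Fin (n (k + 1))) ℝ)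
    (b : (k : ℕ) → Fin (n (k + 1)) → ℝ)
    (hrank : ∀ k, k + 1 ≤ Lm → (W k).rank = n (k + 1))
    (f : (k : ℕ) → (Fin (n 0) → ℝ) → (Fin (n k) → ℝ))
    (hf0 : ∀ x, f 0 x = x)
    (hfhid : ∀ k, k + 1 ≤ Lm →
      ∀ x, f (k + 1) x = fun i => σ (k + 1) (((W k)ᵀ.mulVec (f k x) + b k) i))
    (hfL : ∀ x, f (Lm + 1) x = (W Lm)ᵀ.mulVec (f Lm x) + b Lm) :
    ∀ j : Fin (n (Lm + 1)),
      IsOpen {x : Fin (n 0) → ℝ | ∀ k, k ≠ j → f (Lm + 1) x k < f (Lm + 1) x j} ∧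
      IsPreconnected {x : Fin (n 0) → ℝ | ∀ k, k ≠ j → f (Lm + 1) x k < f (Lm + 1) x j} := by
  intro j
  have hout : f (Lm + 1) = (fun y => (W Lm)ᵀ *ᵥ y + b Lm) ∘ f Lm := funext hfL
  have hcont : Continuous (f (Lm + 1)) := by
    rw [hout]
    exact ((continuous_const.matrix_mulVec continuous_id).add continuous_const).comp
      (continuous_hiddenLayer (fun l h1 h2 => (hσ l h1 h2).1) hf0 hfhid Lm le_rfl)
  refine ⟨(isOpen_setOf_forall_lt j).preimage hcont, ?_⟩
  change IsPreconnected (f (Lm + 1) ⁻¹' {y | ∀ k, k ≠ j → y k < y j})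
  rw [hout, Set.preimage_comp]
  refine isPreconnected_preimage_hiddenLayer (fun l h1 h2 => (hσ l h1 h2).2) hrank hf0 hfhid
    Lm le_rfl _ (Convex.isPreconnected ?_)
  exact ((convex_setOf_forall_lt j).translate_preimage_left (b Lm)).linear_preimage
    (W Lm)ᵀ.mulVecLin

theorem main_connected_decision_regions
    (Lm : ℕ) (n : ℕ → ℕ)
    (σ : ℕ → ℝ → ℝ)
    (hσ : ∀ l, 1 ≤ l → l ≤ Lm →
      Continuous (σ l) ∧ StrictMono (σ l) ∧ Function.Surjective (σ l))
    (W : (k : ℕ) → Matrix (Fin (n k)) (Fin (n (k + 1))) ℝ)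
    (b : (k : ℕ) → Fin (n (k + 1)) → ℝ)
    (hpyr : ∀ k, k + 1 ≤ Lm → n (k + 1) ≤ n k)
    (hrank : ∀ k, k + 1 ≤ Lm → (W k).rank = n (k + 1))
    (f : (k : ℕ) → (Fin (n 0) → ℝ) → (Fin (n k) → ℝ))
    (hf0 : ∀ x, f 0 x = x)
    (hfhid : ∀ k, k + 1 ≤ Lm →
      ∀ x, f (k + 1) x = fun i => σ (k + 1) (((W k)ᵀ.mulVec (f k x) + b k) i))
    (hfL : ∀ x, f (Lm + 1) x = (W Lm)ᵀ.mulVec (f Lm x) + b Lm) :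
    ∀ j : Fin (n (Lm + 1)),
      IsOpen {x : Fin (n 0) → ℝ | ∀ k, k ≠ j → f (Lm + 1) x k < f (Lm + 1) x j} ∧
      IsPreconnected {x : Fin (n 0) → ℝ | ∀ k, k ≠ j → f (Lm + 1) x k < f (Lm + 1) x j} :=
  main_connected_decision_regions_general Lm n σ hσ W b hrank f hf0 hfhid hfL
end

section
/- One-hidden-layer Theorem: Consider a one-hidden-layer network with input dimension d ≥ n_1 (hidden width), σ_1 : ℝ → ℝ continuous and strictly increasing (not necessarily surjective), full-rank W_1 ∈ ℝ^{d×n_1}, and affine output layer. Then every decision region C_j is an open connected subset of ℝ^d. -/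
open Matrix Set

theorem one_hidden_layer_connected_decision_regions
    {d n₁ m : ℕ} (hd : n₁ ≤ d)
    (σ : ℝ → ℝ) (hcont : Continuous σ) (hmono : StrictMono σ)
    (W₁ : Matrix (Fin d) (Fin n₁) ℝ) (hrank : W₁.rank = n₁) (b₁ : Fin n₁ → ℝ)
    (W₂ : Matrix (Fin n₁) (Fin m) ℝ) (b₂ : Fin m → ℝ) :
    ∀ j : Fin m,
      IsOpen {x : Fin d → ℝ | ∀ k, k ≠ j →
        (W₂ᵀ.mulVec (fun i => σ ((W₁ᵀ.mulVec x + b₁) i)) + b₂) k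
          < (W₂ᵀ.mulVec (fun i => σ ((W₁ᵀ.mulVec x + b₁) i)) + b₂) j} ∧
      IsPreconnected {x : Fin d → ℝ | ∀ k, k ≠ j →
        (W₂ᵀ.mulVec (fun i => σ ((W₁ᵀ.mulVec x + b₁) i)) + b₂) k
          < (W₂ᵀ.mulVec (fun i => σ ((W₁ᵀ.mulVec x + b₁) i)) + b₂) j} := by
  intro j
  -- continuity facts
  have hlin1 : Continuous fun x : Fin d → ℝ => W₁ᵀ.mulVec x := by
    exact (W₁ᵀ.mulVecLin).continuous_of_finiteDimensional.congr fun x => by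
      simp [Matrix.mulVecLin_apply, Matrix.mulVec_transpose]
  have hlin2 : Continuous fun v : Fin n₁ → ℝ => W₂ᵀ.mulVec v := by
    exact (W₂ᵀ.mulVecLin).continuous_of_finiteDimensional.congr fun v => by
      simp [Matrix.mulVecLin_apply, Matrix.mulVec_transpose]
  have hhid : Continuous fun x : Fin d → ℝ => (fun i => σ ((W₁ᵀ.mulVec x + b₁) i)) :=
    continuous_pi fun i =>
      hcont.comp ((continuous_apply i).comp (hlin1.add continuous_const))
  have hfc : ∀ k : Fin m, Continuous fun x : Fin d → ℝ =>
      (W₂ᵀ.mulVec (fun i => σ ((W₁ᵀ.mulVec x + b₁) i)) + b₂) k := fun k => by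
    exact ((continuous_apply k).comp (hlin2.comp hhid)).add continuous_const
  constructor
  · -- openness
    have : {x : Fin d → ℝ | ∀ k, k ≠ j →
        (W₂ᵀ.mulVec (fun i => σ ((W₁ᵀ.mulVec x + b₁) i)) + b₂) k
          < (W₂ᵀ.mulVec (fun i => σ ((W₁ᵀ.mulVec x + b₁) i)) + b₂) j}
        = ⋂ k : Fin m, ⋂ _ : k ≠ j, {x : Fin d → ℝ |
          (W₂ᵀ.mulVec (fun i => σ ((W₁ᵀ.mulVec x + b₁) i)) + b₂) k
          < (W₂ᵀ.mulVec (fun i => σ ((W₁ᵀ.mulVec x + b₁) i)) + b₂) j} := by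
      ext x; simp [Set.mem_iInter]
    rw [this]
    exact isOpen_iInter_of_finite fun k => isOpen_iInter_of_finite fun _ =>
      isOpen_lt (hfc k) (hfc j)
  · -- preconnectedness
    -- the range of σ is convex
    have hOrd : OrdConnected (Set.range σ) :=
      (isPreconnected_range hcont).ordConnected
    haveI := hOrd
    have hconv : Convex ℝ (Set.range σ) := hOrd.convex
    -- order isomorphism onto the range, and its homeomorphism
    let e : ℝ ≃o Set.range σ := StrictMono.orderIso σ hmono
    have hσ_symm : ∀ w : Set.range σ, σ (e.symm w) = (w : ℝ) := fun w =>
      congrArg Subtype.val (e.apply_symm_apply w)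
    have hesymm_cont : Continuous (e.symm : Set.range σ → ℝ) :=
      e.toHomeomorph.symm.continuous
    -- right inverse of W₁ᵀ
    have hsurj : LinearMap.range W₁ᵀ.mulVecLin = ⊤ := by
      apply Submodule.eq_top_of_finrank_eq
      have : Module.finrank ℝ (LinearMap.range W₁ᵀ.mulVecLin) = W₁ᵀ.rank := rfl
      rw [this, Matrix.rank_transpose, hrank, Module.finrank_pi]
      simp
    obtain ⟨g, hg⟩ := W₁ᵀ.mulVecLin.exists_rightInverse_of_surjective hsurj
    have hg' : ∀ v, W₁ᵀ.mulVec (g v) = v := fun v => by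
      have := LinearMap.ext_iff.mp hg v
      rw [LinearMap.comp_apply, LinearMap.id_apply, Matrix.mulVecLin_apply] at this
      exact this
    have hgc : Continuous fun v : Fin n₁ → ℝ => g v := g.continuous_of_finiteDimensional
    apply isPreconnected_of_forall_pair
    intro x hx x' hx'
    simp only [Set.mem_setOf_eq] at hx hx'
    set y : Fin n₁ → ℝ := W₁ᵀ.mulVec x + b₁ with hy
    set y' : Fin n₁ → ℝ := W₁ᵀ.mulVec x' + b₁ with hy'
    -- the segment in feature (z) space
    have hZmem : ∀ t : Set.Icc (0:ℝ) 1, ∀ i,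
        (1 - (t:ℝ)) • σ (y i) + (t:ℝ) • σ (y' i) ∈ Set.range σ := fun t i =>
      hconv ⟨y i, rfl⟩ ⟨y' i, rfl⟩ (by linarith [t.2.2]) t.2.1 (by ring)
    -- the lifted path in input space
    let Y : Set.Icc (0:ℝ) 1 → Fin n₁ → ℝ := fun t i =>
      e.symm ⟨(1 - (t:ℝ)) • σ (y i) + (t:ℝ) • σ (y' i), hZmem t i⟩
    let γ : Set.Icc (0:ℝ) 1 → Fin d → ℝ := fun t => x + g (Y t - y)
    have hσY : ∀ t i, σ (Y t i) = (1 - (t:ℝ)) • σ (y i) + (t:ℝ) • σ (y' i) := fun t i =>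
      hσ_symm _
    have hWγ : ∀ t, W₁ᵀ.mulVec (γ t) + b₁ = Y t := fun t => by
      show W₁ᵀ.mulVec (x + g (Y t - y)) + b₁ = Y t
      rw [Matrix.mulVec_add, hg']
      funext i
      simp only [Pi.add_apply, Pi.sub_apply, hy]
      ring
    -- γ is continuous
    have hYc : Continuous Y := by
      refine continuous_pi fun i => hesymm_cont.comp (Continuous.subtype_mk ?_ _)
      have : Continuous fun t : Set.Icc (0:ℝ) 1 => (t : ℝ) := continuous_subtype_val
      fun_prop
    have hγc : Continuous γ :=
      continuous_const.add (hgc.comp (hYc.sub continuous_const))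
    -- endpoints
    have hY0 : Y ⟨0, by norm_num⟩ = y := by
      funext i
      show e.symm ⟨_, _⟩ = y i
      have : (⟨(1 - ((0:ℝ))) • σ (y i) + ((0:ℝ)) • σ (y' i), hZmem ⟨0, by norm_num⟩ i⟩ :
          Set.range σ) = e (y i) := by
        apply Subtype.ext
        show (1 - (0:ℝ)) • σ (y i) + (0:ℝ) • σ (y' i) = σ (y i)
        simp
      rw [this, e.symm_apply_apply]
    have hY1 : Y ⟨1, by norm_num⟩ = y' := by
      funext i
      show e.symm ⟨_, _⟩ = y' i
      have : (⟨(1 - ((1:ℝ))) • σ (y i) + ((1:ℝ)) • σ (y' i), hZmem ⟨1, by norm_num⟩ i⟩ :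
          Set.range σ) = e (y' i) := by
        apply Subtype.ext
        show (1 - (1:ℝ)) • σ (y i) + (1:ℝ) • σ (y' i) = σ (y' i)
        simp
      rw [this, e.symm_apply_apply]
    have hγ0 : γ ⟨0, by norm_num⟩ = x := by
      show x + g (Y ⟨0, by norm_num⟩ - y) = x
      rw [hY0]; simp
    set x₁ : Fin d → ℝ := γ ⟨1, by norm_num⟩ with hx₁
    have hWx₁ : W₁ᵀ.mulVec x₁ + b₁ = y' := by rw [hx₁, hWγ, hY1]
    -- the path stays in the decision region
    have hγmem : ∀ t, γ t ∈ {x : Fin d → ℝ | ∀ k, k ≠ j →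
        (W₂ᵀ.mulVec (fun i => σ ((W₁ᵀ.mulVec x + b₁) i)) + b₂) k
          < (W₂ᵀ.mulVec (fun i => σ ((W₁ᵀ.mulVec x + b₁) i)) + b₂) j} := by
      intro t
      intro k hk
      have hYt : (fun i => σ ((W₁ᵀ.mulVec (γ t) + b₁) i)) =
          (1 - (t:ℝ)) • (fun i => σ (y i)) + (t:ℝ) • (fun i => σ (y' i)) := by
        funext i
        rw [hWγ t]
        simpa using hσY t i
      rw [hYt]
      rw [Matrix.mulVec_add, Matrix.mulVec_smul, Matrix.mulVec_smul]
      set u : Fin m → ℝ := W₂ᵀ.mulVec (fun i => σ (y i)) with hu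
      set u' : Fin m → ℝ := W₂ᵀ.mulVec (fun i => σ (y' i)) with hu'
      have h1 : u k + b₂ k < u j + b₂ j := hx k hk
      have h2 : u' k + b₂ k < u' j + b₂ j := hx' k hk
      have ht0 : (0:ℝ) ≤ (t:ℝ) := t.2.1
      have ht1 : (t:ℝ) ≤ 1 := t.2.2
      simp only [Pi.add_apply, Pi.smul_apply, smul_eq_mul]
      rcases lt_or_eq_of_le ht0 with hpos | hzero
      · nlinarith
      · rw [← hzero]; simp; linarith
    -- the final segment stays in the decision region
    have hseg : segment ℝ x₁ x' ⊆ {x : Fin d → ℝ | ∀ k, k ≠ j →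
        (W₂ᵀ.mulVec (fun i => σ ((W₁ᵀ.mulVec x + b₁) i)) + b₂) k
          < (W₂ᵀ.mulVec (fun i => σ ((W₁ᵀ.mulVec x + b₁) i)) + b₂) j} := by
      rintro p ⟨a, b, ha, hb, hab, rfl⟩
      have hWp : W₁ᵀ.mulVec (a • x₁ + b • x') + b₁ = y' := by
        rw [Matrix.mulVec_add, Matrix.mulVec_smul, Matrix.mulVec_smul]
        funext i
        have e1 : W₁ᵀ.mulVec x₁ i = y' i - b₁ i := by
          have := congrFun hWx₁ i
          simp only [Pi.add_apply] at this
          linarith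
        have e2 : W₁ᵀ.mulVec x' i = y' i - b₁ i := by
          simp [hy']
        simp only [Pi.add_apply, Pi.smul_apply, smul_eq_mul, e1, e2]
        linear_combination (y' i - b₁ i) * hab
      intro k hk
      rw [hWp]
      exact hx' k hk
    -- assemble the preconnected set
    refine ⟨Set.range γ ∪ segment ℝ x₁ x', ?_, ?_, ?_, ?_⟩
    · rintro p (⟨t, rfl⟩ | hp)
      · exact hγmem t
      · exact hseg hp
    · exact Or.inl ⟨⟨0, by norm_num⟩, hγ0⟩
    · exact Or.inr (right_mem_segment ℝ x₁ x')
    · haveI : PreconnectedSpace (Set.Icc (0:ℝ) 1) :=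
        Subtype.preconnectedSpace isPreconnected_Icc
      exact (isPreconnected_range hγc).union x₁
        (Set.mem_range.mpr ⟨⟨1, by norm_num⟩, hx₁.symm⟩) (left_mem_segment ℝ x₁ x')
        ((convex_segment x₁ x').isPreconnected)
end

section
/- Counterexample for ReLU: For the 2-2-2-2 network f(x) = W_3ᵀ σ̂(W_2ᵀ σ̂(W_1ᵀx + b_1) + b_2) + b_3 with σ(t) = max{t,0}, W_1ᵀ = I₂, W_2ᵀ = (√2/2)[[1,1],[−1,1]], W_3ᵀ = [[−1,0],[0,−3]], b_1 = 0, b_2 = (1/√2)(√2−1, −3)ᵀ, b_3 = (1,0)ᵀ, the decision region C_1 = {x : f_1(x) > f_2(x)} equals {x ∈ ℝ² : x₁ < 1, x₂ < 1, x₁ + x₂ < 1} ∪ {x ∈ ℝ² : x₂ > 4, 2x₁ − x₂ + 4 < 0}, which is disconnected, even though all hidden weight matrices have full rank and the network is pyramidal. -/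
private lemma relu_aux (a b : ℝ) (ha : 0 ≤ a) (hb : 0 ≤ b) :
    (-3 * max (Real.sqrt 2 / 2 * (-a + b) + 1 / Real.sqrt 2 * (-3)) 0
      < -(max (Real.sqrt 2 / 2 * (a + b) + 1 / Real.sqrt 2 * (Real.sqrt 2 - 1)) 0) + 1)
    ↔ (a + b < 1 ∨ (4 < b ∧ 2 * a - b + 4 < 0)) := by
  have hs0 : (0:ℝ) < Real.sqrt 2 := Real.sqrt_pos.2 (by norm_num)
  have hs2 : Real.sqrt 2 * Real.sqrt 2 = 2 := Real.mul_self_sqrt (by norm_num)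
  have hs1 : (1:ℝ) < Real.sqrt 2 := by nlinarith
  set s := Real.sqrt 2 with hsdef
  have h1s : 1 / s = s / 2 := by
    rw [div_eq_div_iff hs0.ne' (by norm_num : (2:ℝ) ≠ 0)]
    linarith
  have hz0 : max (s / 2 * (a + b) + 1 / s * (s - 1)) 0
      = s / 2 * (a + b) + 1 / s * (s - 1) := by
    apply max_eq_left
    rw [h1s]
    nlinarith
  rw [hz0]
  rcases le_or_gt (b - a) 3 with h | h
  · have hz1 : max (s / 2 * (-a + b) + 1 / s * (-3)) 0 = 0 := by
      apply max_eq_right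
      rw [h1s]
      nlinarith
    rw [hz1]
    constructor
    · intro hlt
      left
      nlinarith
    · rintro (h' | ⟨h1, h2⟩)
      · nlinarith
      · nlinarith
  · have hz1 : max (s / 2 * (-a + b) + 1 / s * (-3)) 0
        = s / 2 * (-a + b) + 1 / s * (-3) := by
      apply max_eq_left
      rw [h1s]
      nlinarith
    rw [hz1, h1s]
    constructor
    · intro hlt
      right
      constructor <;> nlinarith
    · rintro (h' | ⟨h1, h2⟩)
      · nlinarith
      · nlinarith

private lemma relu_key (x0 x1 : ℝ) :
    (-3 * max (Real.sqrt 2 / 2 * (-(max x0 0) + max x1 0) + 1 / Real.sqrt 2 * (-3)) 0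
      < -(max (Real.sqrt 2 / 2 * (max x0 0 + max x1 0) + 1 / Real.sqrt 2 * (Real.sqrt 2 - 1)) 0) + 1)
    ↔ ((x0 < 1 ∧ x1 < 1 ∧ x0 + x1 < 1) ∨ (x1 > 4 ∧ 2 * x0 - x1 + 4 < 0)) := by
  rw [relu_aux _ _ (le_max_right _ _) (le_max_right _ _)]
  constructor
  · rintro (h | ⟨h1, h2⟩)
    · left
      exact ⟨by nlinarith [le_max_left x0 (0:ℝ), le_max_right x1 (0:ℝ)],
        by nlinarith [le_max_right x0 (0:ℝ), le_max_left x1 (0:ℝ)],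
        by nlinarith [le_max_left x0 (0:ℝ), le_max_left x1 (0:ℝ)]⟩
    · right
      have hx1nn : 0 ≤ x1 := by
        rcases max_cases x1 (0:ℝ) with ⟨e, he⟩ | ⟨e, he⟩
        · exact he
        · rw [e] at h1; linarith
      rw [max_eq_left hx1nn] at h1 h2
      exact ⟨h1, by nlinarith [le_max_left x0 (0:ℝ)]⟩
  · rintro (⟨h0, h1, h01⟩ | ⟨h1, h2⟩)
    · left
      rcases max_cases x0 0 with ⟨e0, _⟩ | ⟨e0, _⟩ <;>
        rcases max_cases x1 0 with ⟨e1, _⟩ | ⟨e1, _⟩ <;> rw [e0, e1] <;> linarith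
    · right
      have hx1 : max x1 0 = x1 := max_eq_left (by linarith)
      rw [hx1]
      refine ⟨h1, ?_⟩
      rcases max_cases x0 0 with ⟨e0, _⟩ | ⟨e0, _⟩ <;> rw [e0] <;> linarith

theorem relu_counterexample :
    let σ : ℝ → ℝ := fun t => max t 0
    let z : (Fin 2 → ℝ) → Fin 2 → ℝ := fun x =>
      ![σ (Real.sqrt 2 / 2 * (σ (x 0) + σ (x 1)) + (1 / Real.sqrt 2) * (Real.sqrt 2 - 1)),
        σ (Real.sqrt 2 / 2 * (-(σ (x 0)) + σ (x 1)) + (1 / Real.sqrt 2) * (-3))]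
    let out : (Fin 2 → ℝ) → Fin 2 → ℝ := fun x =>
      ![-(z x 0) + 1, -3 * z x 1]
    {x : Fin 2 → ℝ | out x 1 < out x 0}
        = {x : Fin 2 → ℝ | x 0 < 1 ∧ x 1 < 1 ∧ x 0 + x 1 < 1}
          ∪ {x : Fin 2 → ℝ | x 1 > 4 ∧ 2 * x 0 - x 1 + 4 < 0} ∧
    ¬ IsPreconnected {x : Fin 2 → ℝ | out x 1 < out x 0} := by
  intro σ z out
  have heq : {x : Fin 2 → ℝ | out x 1 < out x 0}
      = {x : Fin 2 → ℝ | x 0 < 1 ∧ x 1 < 1 ∧ x 0 + x 1 < 1}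
        ∪ {x : Fin 2 → ℝ | x 1 > 4 ∧ 2 * x 0 - x 1 + 4 < 0} := by
    ext x
    simp only [Set.mem_setOf_eq, Set.mem_union, out, z, σ, Matrix.cons_val_one,
      Matrix.head_cons, Matrix.cons_val_zero]
    exact relu_key (x 0) (x 1)
  refine ⟨heq, ?_⟩
  intro hpc
  obtain ⟨y, hyS, hyU, hyV⟩ := hpc {x | x 1 < 4} {x | (1:ℝ) < x 1}
    (isOpen_lt (continuous_apply 1) continuous_const)
    (isOpen_lt continuous_const (continuous_apply 1))
    (by
      rw [heq]
      rintro x (⟨_, h, _⟩ | ⟨h, _⟩)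
      · exact Or.inl (by simpa using by linarith : x ∈ {x : Fin 2 → ℝ | x 1 < 4})
      · exact Or.inr (by simpa using by linarith : x ∈ {x : Fin 2 → ℝ | (1:ℝ) < x 1}))
    ⟨![0, 0], by
      rw [heq]
      constructor
      · left
        simp
      · simp⟩
    ⟨![(-10 : ℝ), 5], by
      rw [heq]
      constructor
      · refine Or.inr ⟨?_, ?_⟩ <;>
          norm_num [Matrix.cons_val_one, Matrix.head_cons, Matrix.cons_val_zero]
      · norm_num [Set.mem_setOf_eq, Matrix.cons_val_one, Matrix.head_cons]⟩
  rw [heq] at hyS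
  simp only [Set.mem_setOf_eq, Set.mem_union] at hyS hyU hyV
  rcases hyS with ⟨_, h, _⟩ | ⟨h, _⟩ <;> linarith
end
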